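/- Let S be a commutative ring with 2 = 0 and fix m ≥ 1. Let B_m = S[w_m, w_{m+1}, w_{m+2}, ...] with the S-linear derivation ∂ defined by ∂(w_m) = 0 and ∂(w_n) = w_{n-1}^2 for n > m. Then ∂^2 = 0 and the homology ker(∂)/im(∂) is a free S-module on the classes of 1 and w_m. -/

import Mathlib

/-!
After the reindexing `w_{m+n} ↦ X n`, the squares `w_n²` are cycles (as `2 = 0`), so `∂` is linear
over `S[w_0², w_1², …]`, and over that ring `B_m` is the Koszul complex of the regular sequence
`w_0², w_1², …` (with exterior generators `w_1, w_2, …`) tensored with the span of `1, w_0`.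

Concretely, `w^d` is a tensor of the factors `(⌊d j / 2⌋, d (j + 1) mod 2)`, `j ≥ 0`, and the term
of `∂ w^d` coming from `w_{j+1}` only moves the `j`-th factor, from `(k, 1)` to `(k + 1, 0)`.
Each factor carries the contraction `(k + 1, 0) ↦ (k, 1)`; applying it at the first factor that is
not `(0, 0)` gives a homotopy `h` with `∂h + h∂ = id - π`, where `π` keeps the coefficients of `1`
and `w_0`. Finally, no monomial of any `∂ p` is square-free, so no nonzero `s + t w_0` is a
boundary.
-/

open MvPolynomial

set_option synthInstance.maxHeartbeats 1000000
set_option maxHeartbeats 1000000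

/-- The derivation on `B_m = S[w_m, w_{m+1}, ...]` determined by `∂(w_m) = 0` and
`∂(w_n) = w_{n-1}^2` for `n > m`. -/
noncomputable def bockDerivFrom (S : Type*) [CommRing S] (m : ℕ) :
    Derivation S (MvPolynomial {i : ℕ // m ≤ i} S) (MvPolynomial {i : ℕ // m ≤ i} S) :=
  MvPolynomial.mkDerivation S (fun i =>
    if h : i.1 = m then 0 else (X (⟨i.1 - 1, by omega⟩ : {i : ℕ // m ≤ i})) ^ 2)

open Finset Finsupp

theorem Derivation.apply_apply_mul_of_two_eq_zero {R A : Type*} [CommSemiring R] [CommRing A]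
    [Algebra R A] (h2 : (2 : A) = 0) (D : Derivation R A A) (a b : A) :
    D (D (a * b)) = a * D (D b) + b * D (D a) := by
  simp only [Derivation.leibniz, smul_eq_mul, map_add]
  linear_combination (D a * D b) * h2

theorem Nat.cast_eq_ite_odd {S : Type*} [CommRing S] (h2 : (2 : S) = 0) (k : ℕ) :
    (k : S) = if Odd k then 1 else 0 := by
  obtain ⟨r, rfl | rfl⟩ := Nat.even_or_odd' k
  · simp [h2]
  · simp [h2, parity_simps]

noncomputable def bockDeriv (S : Type*) [CommRing S] :
    Derivation S (MvPolynomial ℕ S) (MvPolynomial ℕ S) :=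
  mkDerivation S fun
    | 0 => 0
    | j + 1 => X j ^ 2

section Exponents

variable {d : ℕ →₀ ℕ} {j k : ℕ}

-- The exponent of the term `w^d · w_j² / w_{j+1}` of `∂ w^d`.
noncomputable def lowerAt (j : ℕ) (d : ℕ →₀ ℕ) : ℕ →₀ ℕ := d - single (j + 1) 1 + single j 2

noncomputable def raiseAt (j : ℕ) (d : ℕ →₀ ℕ) : ℕ →₀ ℕ := d + single (j + 1) 1 - single j 2

theorem lowerAt_apply :
    lowerAt j d k = if k = j + 1 then d k - 1 else if k = j then d k + 2 else d k := by
  simp only [lowerAt, Finsupp.add_apply, Finsupp.tsub_apply, single_apply]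
  split_ifs <;> omega

theorem raiseAt_apply :
    raiseAt j d k = if k = j + 1 then d k + 1 else if k = j then d k - 2 else d k := by
  simp only [raiseAt, Finsupp.add_apply, Finsupp.tsub_apply, single_apply]
  split_ifs <;> omega

theorem lowerAt_raiseAt (h : 2 ≤ d j) : lowerAt j (raiseAt j d) = d := by
  ext k
  simp only [lowerAt_apply, raiseAt_apply]
  split_ifs <;> subst_vars <;> omega

theorem raiseAt_lowerAt (h : d (j + 1) ≠ 0) : raiseAt j (lowerAt j d) = d := by
  ext k
  simp only [lowerAt_apply, raiseAt_apply]
  split_ifs <;> subst_vars <;> omega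

theorem lowerAt_raiseAt_comm (hjk : j ≠ k) :
    lowerAt j (raiseAt k d) = raiseAt k (lowerAt j d) := by
  ext i
  simp only [lowerAt_apply, raiseAt_apply]
  split_ifs <;> subst_vars <;> omega

-- The `j`-th factor `(⌊d j / 2⌋, d (j + 1) mod 2)` of `w^d` is not `(0, 0)`.
def IsActive (d : ℕ →₀ ℕ) (j : ℕ) : Prop := 2 ≤ d j ∨ Odd (d (j + 1))

noncomputable def pivot (d : ℕ →₀ ℕ) : ℕ := sInf {j | IsActive d j}

theorem isActive_pivot (h : ∃ j, IsActive d j) : IsActive d (pivot d) := Nat.sInf_mem h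

theorem isActive_lowerAt_iff (h : Odd (d (j + 1))) : IsActive (lowerAt j d) k ↔ IsActive d k := by
  simp only [IsActive, lowerAt_apply, Nat.odd_iff] at h ⊢
  split_ifs <;> subst_vars <;> omega

theorem pivot_lowerAt (h : Odd (d (j + 1))) : pivot (lowerAt j d) = pivot d := by
  simp only [pivot, isActive_lowerAt_iff h]

theorem odd_raiseAt_succ (h : Even (d (j + 1))) : Odd (raiseAt j d (j + 1)) := by
  simpa [raiseAt_apply] using h.add_one

theorem eq_zero_or_eq_single_of_forall_not_isActive (h : ∀ j, ¬ IsActive d j) :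
    d = 0 ∨ d = single 0 1 := by
  simp only [IsActive, not_or, not_le, Nat.not_odd_iff_even, Nat.even_iff] at h
  have hsucc : ∀ j, d (j + 1) = 0 := fun j => by have := h j; have := h (j + 1); omega
  obtain h0 | h0 : d 0 = 0 ∨ d 0 = 1 := by have := (h 0).1; omega
  · left
    ext (_ | j) <;> simp [h0, hsucc]
  · right
    ext (_ | j) <;> simp [h0, hsucc]

end Exponents

section Derivation

variable {S : Type*} [CommRing S] {d : ℕ →₀ ℕ}

theorem bockDeriv_X_zero : bockDeriv S (X 0) = 0 := mkDerivation_X _ _ _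

theorem bockDeriv_X_succ (j : ℕ) : bockDeriv S (X (j + 1)) = X j ^ 2 := mkDerivation_X _ _ _

theorem bockDeriv_bockDeriv (h2 : (2 : S) = 0) (p : MvPolynomial ℕ S) :
    bockDeriv S (bockDeriv S p) = 0 := by
  have h2' : (2 : MvPolynomial ℕ S) = 0 := by rw [← map_ofNat C 2, h2, map_zero]
  induction p using MvPolynomial.induction_on with
  | C a => rw [derivation_C, map_zero]
  | add p q hp hq => rw [map_add, map_add, hp, hq, add_zero]
  | mul_X p i hp =>
    rw [Derivation.apply_apply_mul_of_two_eq_zero h2', hp, mul_zero, add_zero]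
    cases i with
    | zero => rw [bockDeriv_X_zero, map_zero, mul_zero]
    | succ j =>
      rw [bockDeriv_X_succ, sq, Derivation.leibniz, smul_eq_mul, ← two_mul, h2', zero_mul,
        mul_zero]

theorem bockDeriv_monomial (h2 : (2 : S) = 0) (d : ℕ →₀ ℕ) (T : Finset ℕ)
    (hT : ∀ j, d (j + 1) ≠ 0 → j ∈ T) :
    bockDeriv S (monomial d 1) =
      ∑ j ∈ T, if Odd (d (j + 1)) then monomial (lowerAt j d) 1 else 0 := by
  have hsupp : d.support ⊆ insert 0 (T.map (addRightEmbedding 1)) := by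
    rintro (_ | j) hj
    · exact mem_insert_self _ _
    · exact mem_insert_of_mem (mem_map_of_mem _ (hT j (mem_support_iff.mp hj)))
  rw [bockDeriv, mkDerivation_monomial, one_smul, Finsupp.sum_of_support_subset d hsupp _
    (fun _ _ => by rw [Nat.cast_zero, monomial_zero, zero_smul]),
    sum_insert (by simp), smul_zero, zero_add, sum_map]
  refine sum_congr rfl fun j _ => ?_
  rw [addRightEmbedding_apply, Nat.cast_eq_ite_odd h2]
  dsimp only
  split_ifs
  · rw [smul_eq_mul, X_pow_eq_monomial, monomial_mul, one_mul, lowerAt]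
  · rw [monomial_zero, zero_smul]

theorem bockDeriv_monomial_of_forall_not_isActive (h : ∀ j, ¬ IsActive d j) :
    bockDeriv S (monomial d 1) = 0 := by
  rcases eq_zero_or_eq_single_of_forall_not_isActive h with rfl | rfl
  · rw [monomial_zero', C_1, Derivation.map_one_eq_zero]
  · rw [← X, bockDeriv_X_zero]

theorem coeff_bockDeriv_eq_zero (h2 : (2 : S) = 0) {e : ℕ →₀ ℕ} (he : ∀ i, e i ≤ 1)
    (p : MvPolynomial ℕ S) : coeff e (bockDeriv S p) = 0 := by
  induction p using MvPolynomial.induction_on' with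
  | monomial d a =>
    rw [← mul_one a, ← smul_eq_mul, ← smul_monomial, Derivation.map_smul, coeff_smul,
      bockDeriv_monomial h2 d (d.support.image (· - 1))
        (fun j hj => mem_image.mpr ⟨j + 1, mem_support_iff.mpr hj, rfl⟩),
      coeff_sum, sum_eq_zero, smul_zero]
    intro j _
    split_ifs
    · rw [coeff_monomial, if_neg fun h => ?_]
      simpa [← h, lowerAt_apply] using he j
    · exact coeff_zero e
  | add p q hp hq => rw [map_add, coeff_add, hp, hq, add_zero]

end Derivation

section Homotopy

variable (S : Type*) [CommRing S]

noncomputable def homotopyMonomial (d : ℕ →₀ ℕ) : MvPolynomial ℕ S :=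
  if 2 ≤ d (pivot d) ∧ Even (d (pivot d + 1)) then monomial (raiseAt (pivot d) d) 1 else 0

noncomputable def bockHomotopy : MvPolynomial ℕ S →ₗ[S] MvPolynomial ℕ S :=
  (basisMonomials ℕ S).constr S (homotopyMonomial S)

noncomputable def criticalPart : MvPolynomial ℕ S →ₗ[S] MvPolynomial ℕ S where
  toFun p := C (coeff 0 p) + C (coeff (single 0 1) p) * X 0
  map_add' p q := by simp only [coeff_add, map_add]; ring
  map_smul' a p := by
    simp only [coeff_smul, smul_eq_mul, map_mul, RingHom.id_apply]
    rw [smul_eq_C_mul]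
    ring

variable {S} {d : ℕ →₀ ℕ} {j : ℕ}

theorem bockHomotopy_monomial : bockHomotopy S (monomial d 1) = homotopyMonomial S d := by
  simpa [bockHomotopy] using (basisMonomials ℕ S).constr_basis S (homotopyMonomial S) d

theorem homotopyMonomial_of_forall_not_isActive (h : ∀ j, ¬ IsActive d j) :
    homotopyMonomial S d = 0 :=
  if_neg fun hc => h _ (Or.inl hc.1)

theorem homotopyMonomial_lowerAt_pivot (h : Odd (d (pivot d + 1))) :
    homotopyMonomial S (lowerAt (pivot d) d) = monomial d 1 := by
  rw [homotopyMonomial, pivot_lowerAt h, if_pos, raiseAt_lowerAt h.pos.ne']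
  generalize pivot d = J at h ⊢
  simp only [lowerAt_apply, Nat.even_iff]
  rw [Nat.odd_iff] at h
  split_ifs <;> omega

theorem homotopyMonomial_lowerAt_of_ne (h : Odd (d (j + 1))) (hj : j ≠ pivot d) :
    homotopyMonomial S (lowerAt j d) =
      if 2 ≤ d (pivot d) ∧ Even (d (pivot d + 1)) then
        monomial (lowerAt j (raiseAt (pivot d) d)) 1
      else 0 := by
  rw [homotopyMonomial, pivot_lowerAt h]
  have hcond : 2 ≤ lowerAt j d (pivot d) ∧ Even (lowerAt j d (pivot d + 1)) ↔
      2 ≤ d (pivot d) ∧ Even (d (pivot d + 1)) := by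
    generalize pivot d = J at hj ⊢
    simp only [lowerAt_apply, Nat.even_iff]
    rw [Nat.odd_iff] at h
    split_ifs <;> subst_vars <;> omega
  by_cases hc : 2 ≤ d (pivot d) ∧ Even (d (pivot d + 1))
  · rw [if_pos (hcond.mpr hc), if_pos hc, lowerAt_raiseAt_comm hj]
  · rw [if_neg (mt hcond.mp hc), if_neg hc]

end Homotopy

section Contraction

variable {S : Type*} [CommRing S] {d : ℕ →₀ ℕ}

theorem bockDeriv_homotopyMonomial_add_of_odd (h2 : (2 : S) = 0) (T : Finset ℕ)
    (hT : ∀ j, d (j + 1) ≠ 0 → j ∈ T) (hodd : Odd (d (pivot d + 1))) :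
    bockDeriv S (homotopyMonomial S d) + bockHomotopy S (bockDeriv S (monomial d 1)) =
      monomial d 1 := by
  have hJT : pivot d ∈ T := hT _ hodd.pos.ne'
  have hnot : ¬ (2 ≤ d (pivot d) ∧ Even (d (pivot d + 1))) :=
    fun hc => Nat.not_even_iff_odd.mpr hodd hc.2
  rw [homotopyMonomial, if_neg hnot, map_zero, zero_add, bockDeriv_monomial h2 d T hT, map_sum,
    sum_eq_single_of_mem _ hJT fun j _ hj => ?_, if_pos hodd, bockHomotopy_monomial,
    homotopyMonomial_lowerAt_pivot hodd]
  split_ifs with hjodd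
  · rw [bockHomotopy_monomial, homotopyMonomial_lowerAt_of_ne hjodd hj, if_neg hnot]
  · exact map_zero _

theorem bockDeriv_homotopyMonomial_add_of_even (h2 : (2 : S) = 0) (T : Finset ℕ)
    (hT : ∀ j, d (j + 1) ≠ 0 → j ∈ T) (hJT : pivot d ∈ T) (hJ : 2 ≤ d (pivot d))
    (heven : Even (d (pivot d + 1))) :
    bockDeriv S (homotopyMonomial S d) + bockHomotopy S (bockDeriv S (monomial d 1)) =
      monomial d 1 := by
  have hxx : ∀ x : MvPolynomial ℕ S, x + x = 0 := fun x => by rw [← two_smul S, h2, zero_smul]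
  have hraise : ∀ j, raiseAt (pivot d) d (j + 1) ≠ 0 → j ∈ T := fun j hj => by
    by_cases hjJ : j = pivot d
    · rwa [hjJ]
    · refine hT j fun h0 => hj ?_
      generalize pivot d = J at hjJ hJ
      simp only [raiseAt_apply]
      split_ifs <;> subst_vars <;> omega
  have hpar : ∀ j ≠ pivot d, Odd (raiseAt (pivot d) d (j + 1)) ↔ Odd (d (j + 1)) := by
    intro j hj
    generalize pivot d = J at hj hJ
    simp only [raiseAt_apply, Nat.odd_iff]
    split_ifs <;> subst_vars <;> omega
  rw [homotopyMonomial, if_pos ⟨hJ, heven⟩, bockDeriv_monomial h2 _ T hraise,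
    bockDeriv_monomial h2 d T hT, map_sum, ← sum_add_distrib,
    sum_eq_single_of_mem _ hJT fun j _ hj => ?_, if_pos (odd_raiseAt_succ heven),
    lowerAt_raiseAt hJ, if_neg (Nat.not_odd_iff_even.mpr heven), map_zero, add_zero]
  by_cases hjodd : Odd (d (j + 1))
  · rw [if_pos ((hpar j hj).mpr hjodd), if_pos hjodd, bockHomotopy_monomial,
      homotopyMonomial_lowerAt_of_ne hjodd hj, if_pos ⟨hJ, heven⟩, hxx]
  · rw [if_neg (mt (hpar j hj).mp hjodd), if_neg hjodd, map_zero, add_zero]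

theorem bockDeriv_homotopyMonomial_add (h2 : (2 : S) = 0) (hd : ∃ j, IsActive d j) :
    bockDeriv S (homotopyMonomial S d) + bockHomotopy S (bockDeriv S (monomial d 1)) =
      monomial d 1 := by
  set T := insert (pivot d) (d.support.image (· - 1))
  have hT : ∀ j, d (j + 1) ≠ 0 → j ∈ T := fun j hj =>
    mem_insert_of_mem (mem_image.mpr ⟨j + 1, mem_support_iff.mpr hj, rfl⟩)
  rcases Nat.even_or_odd (d (pivot d + 1)) with heven | hodd
  · exact bockDeriv_homotopyMonomial_add_of_even h2 T hT (mem_insert_self _ _)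
      ((isActive_pivot hd).resolve_right (Nat.not_odd_iff_even.mpr heven)) heven
  · exact bockDeriv_homotopyMonomial_add_of_odd h2 T hT hodd

theorem criticalPart_monomial_of_isActive (hd : ∃ j, IsActive d j) :
    criticalPart S (monomial d 1) = 0 := by
  obtain ⟨j, hj⟩ := hd
  have h0 : d ≠ 0 := by rintro rfl; simp [IsActive] at hj
  have h1 : d ≠ single 0 1 := by
    rintro rfl
    simp [IsActive, single_apply] at hj
    split_ifs at hj <;> omega
  simp [criticalPart, coeff_monomial, h0, h1]

theorem criticalPart_monomial_of_forall_not_isActive (hd : ∀ j, ¬ IsActive d j) :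
    criticalPart S (monomial d 1) = monomial d 1 := by
  rcases eq_zero_or_eq_single_of_forall_not_isActive hd with rfl | rfl
  · simp [criticalPart, coeff_one, (single_ne_zero.mpr one_ne_zero).symm]
  · simp [criticalPart, coeff_monomial]
    rfl

theorem bockDeriv_bockHomotopy_add (h2 : (2 : S) = 0) (p : MvPolynomial ℕ S) :
    bockDeriv S (bockHomotopy S p) + bockHomotopy S (bockDeriv S p) + criticalPart S p = p := by
  suffices h : (bockDeriv S).toLinearMap ∘ₗ bockHomotopy S +
      bockHomotopy S ∘ₗ (bockDeriv S).toLinearMap + criticalPart S = LinearMap.id from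
    LinearMap.congr_fun h p
  refine (basisMonomials ℕ S).ext fun d => ?_
  simp only [LinearMap.add_apply, LinearMap.comp_apply, Derivation.coeFn_coe,
    coe_basisMonomials, LinearMap.id_apply, bockHomotopy_monomial]
  by_cases hd : ∃ j, IsActive d j
  · rw [criticalPart_monomial_of_isActive hd, add_zero, bockDeriv_homotopyMonomial_add h2 hd]
  · push Not at hd
    rw [homotopyMonomial_of_forall_not_isActive hd, bockDeriv_monomial_of_forall_not_isActive hd,
      map_zero, map_zero, zero_add, zero_add, criticalPart_monomial_of_forall_not_isActive hd]

theorem exists_sub_eq_bockDeriv_of_bockDeriv_eq_zero (h2 : (2 : S) = 0) {p : MvPolynomial ℕ S}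
    (hp : bockDeriv S p = 0) : ∃ s t q, p - (C s + C t * X 0) = bockDeriv S q := by
  have h := bockDeriv_bockHomotopy_add h2 p
  rw [hp, map_zero, add_zero] at h
  exact ⟨_, _, _, (eq_sub_of_add_eq h).symm⟩

theorem eq_zero_of_bockDeriv_eq (h2 : (2 : S) = 0) {s t : S} {q : MvPolynomial ℕ S}
    (hq : bockDeriv S q = C s + C t * X 0) : s = 0 ∧ t = 0 := by
  have hs := coeff_bockDeriv_eq_zero h2 (e := 0) (fun _ => zero_le_one) q
  have ht := coeff_bockDeriv_eq_zero h2 (e := single 0 1)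
    (fun i => by rw [single_apply]; split_ifs <;> omega) q
  rw [hq] at hs ht
  simp [coeff_X, (single_ne_zero.mpr one_ne_zero).symm] at hs ht
  exact ⟨hs, ht⟩

end Contraction

def natShift (m : ℕ) : ℕ ≃ {i : ℕ // m ≤ i} where
  toFun n := ⟨n + m, Nat.le_add_left m n⟩
  invFun i := i - m
  left_inv n := Nat.add_sub_cancel n m
  right_inv i := Subtype.ext (Nat.sub_add_cancel i.2)

theorem bockDerivFrom_rename {S : Type*} [CommRing S] (m : ℕ) (p : MvPolynomial ℕ S) :
    bockDerivFrom S m (rename (natShift m) p) = rename (natShift m) (bockDeriv S p) := by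
  induction p using MvPolynomial.induction_on with
  | C a => rw [rename_C, derivation_C, derivation_C, map_zero]
  | add p q hp hq => simp only [map_add, hp, hq]
  | mul_X p i hp =>
    have hX : bockDerivFrom S m (X (natShift m i)) = rename (natShift m) (bockDeriv S (X i)) := by
      rw [bockDerivFrom, mkDerivation_X]
      cases i with
      | zero => simp [natShift, bockDeriv_X_zero]
      | succ j =>
        rw [dif_neg (by simp [natShift]), bockDeriv_X_succ, map_pow, rename_X]
        congr 2
        exact Subtype.ext (by simp [natShift])
    simp only [map_mul, map_add, rename_X, Derivation.leibniz, smul_eq_mul, hp, hX]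

theorem stmt15_general (S : Type*) [CommRing S] (h2 : (2 : S) = 0) (m : ℕ) :
    (∀ p : MvPolynomial {i : ℕ // m ≤ i} S,
      bockDerivFrom S m (bockDerivFrom S m p) = 0)
    ∧ (∀ p : MvPolynomial {i : ℕ // m ≤ i} S, bockDerivFrom S m p = 0 →
        ∃ s t : S, ∃ q : MvPolynomial {i : ℕ // m ≤ i} S,
          p - (C s + C t * X ⟨m, le_refl m⟩) = bockDerivFrom S m q)
    ∧ (∀ s t : S,
        (∃ q : MvPolynomial {i : ℕ // m ≤ i} S,
          bockDerivFrom S m q = C s + C t * X ⟨m, le_refl m⟩) →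
        s = 0 ∧ t = 0) := by
  let Φ := renameEquiv S (natShift m)
  have hΦ : ∀ p, bockDerivFrom S m (Φ p) = Φ (bockDeriv S p) := bockDerivFrom_rename m
  have hw : ∀ s t : S, Φ (C s + C t * X 0) = C s + C t * X ⟨m, le_refl m⟩ := fun s t => by
    simp [Φ, natShift]
  refine ⟨fun p => ?_, fun p hp => ?_, fun s t ⟨q, hq⟩ => ?_⟩
  · obtain ⟨p, rfl⟩ := Φ.surjective p
    rw [hΦ, hΦ, bockDeriv_bockDeriv h2, map_zero]
  · obtain ⟨p, rfl⟩ := Φ.surjective p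
    rw [hΦ, map_eq_zero_iff Φ Φ.injective] at hp
    obtain ⟨s, t, q, hq⟩ := exists_sub_eq_bockDeriv_of_bockDeriv_eq_zero h2 hp
    exact ⟨s, t, Φ q, by rw [hΦ, ← hq, map_sub, hw]⟩
  · obtain ⟨q, rfl⟩ := Φ.surjective q
    rw [hΦ, ← hw, Φ.injective.eq_iff] at hq
    exact eq_zero_of_bockDeriv_eq h2 hq

/-- If `2 = 0` in `S`, then `∂² = 0` on `B_m`, and the homology `ker ∂ / im ∂` is a free
`S`-module on the classes of `1` and `w_m`: every kernel element is congruent mod `im ∂`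
to `s·1 + t·w_m`, and `s·1 + t·w_m ∈ im ∂` forces `s = t = 0`. -/
theorem stmt15 (S : Type*) [CommRing S] (h2 : (2 : S) = 0) (m : ℕ) (hm : 1 ≤ m) :
    (∀ p : MvPolynomial {i : ℕ // m ≤ i} S,
      bockDerivFrom S m (bockDerivFrom S m p) = 0)
    ∧ (∀ p : MvPolynomial {i : ℕ // m ≤ i} S, bockDerivFrom S m p = 0 →
        ∃ s t : S, ∃ q : MvPolynomial {i : ℕ // m ≤ i} S,
          p - (C s + C t * X ⟨m, le_refl m⟩) = bockDerivFrom S m q)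
    ∧ (∀ s t : S,
        (∃ q : MvPolynomial {i : ℕ // m ≤ i} S,
          bockDerivFrom S m q = C s + C t * X ⟨m, le_refl m⟩) →
        s = 0 ∧ t = 0) :=
  stmt15_general S h2 m
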